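/- arXiv:2601.15890 — 3 statements merged into one kernel-verified Lean document; each statement's English description precedes it below -/
import Mathlib

section
/- For all positive integers t and m there exists n such that every set S of n tuples of length t (over any set) contains a subset A of m tuples and an index set I ⊆ [t] such that, letting J = [t] \ I, for all distinct tuples a, a' in A, the restrictions a|_I and a'|_I are equal (coordinatewise), and the restrictions a|_J and a'|_J are disjoint (share no element). -/
/-!
Induct on a set `K` of coordinates outside of which all tuples of the family agree. Take a
maximal subfamily `D` whose restrictions to `K` are pairwise disjoint. If `D` has `m` members,
they form a sunflower with kernel `Kᶜ`. Otherwise every tuple meets one of the fewer than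
`m · |K|` values that `D` takes on `K`, so by pigeonhole a large part of the family shares a
value at some coordinate `i ∈ K`, and that part agrees outside `K.erase i`.
-/

open Finset

variable {ι α : Type*}

def IsTupleSunflower (A : Finset (ι → α)) (I : Finset ι) : Prop :=
  ∀ a ∈ A, ∀ a' ∈ A, a ≠ a' → (∀ i ∈ I, a i = a' i) ∧ (∀ i ∉ I, ∀ j ∉ I, a i ≠ a' j)

def DisjointOn (K : Finset ι) (x y : ι → α) : Prop :=
  ∀ i ∈ K, ∀ j ∈ K, x i ≠ y j

instance (K : Finset ι) : Std.Symm (DisjointOn (α := α) K) where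
  symm _ _ h i hi j hj hij := h j hj i hi hij.symm

theorem isTupleSunflower_compl [Fintype ι] [DecidableEq ι] {A : Finset (ι → α)} {K : Finset ι}
    (hagree : ∀ a ∈ A, ∀ b ∈ A, ∀ i ∉ K, a i = b i)
    (hdisj : (A : Set (ι → α)).Pairwise (DisjointOn K)) :
    IsTupleSunflower A Kᶜ := by
  intro a ha b hb hab
  refine ⟨fun i hi => hagree a ha b hb i (mem_compl.mp hi), fun i hi j hj => ?_⟩
  rw [notMem_compl] at hi hj
  exact hdisj ha hb hab i hi j hj

theorem exists_pairwise_disjointOn_forall_meets {K : Finset ι} (hK : K.Nonempty)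
    (S : Finset (ι → α)) :
    ∃ D ⊆ S, (D : Set (ι → α)).Pairwise (DisjointOn K) ∧
      ∀ a ∈ S, ∃ i ∈ K, ∃ d ∈ D, ∃ j ∈ K, a i = d j := by
  classical
  obtain ⟨D, hD, hmax⟩ := exists_max_image
    (S.powerset.filter fun D : Finset (ι → α) => (D : Set (ι → α)).Pairwise (DisjointOn K)) card
    ⟨∅, by simp⟩
  rw [mem_filter, mem_powerset] at hD
  refine ⟨D, hD.1, hD.2, fun a ha => ?_⟩
  obtain ⟨i, hi⟩ := hK
  by_cases haD : a ∈ D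
  · exact ⟨i, hi, a, haD, i, hi, rfl⟩
  have hnot : ¬ ((insert a D : Finset (ι → α)) : Set (ι → α)).Pairwise (DisjointOn K) := by
    intro hins
    have := hmax (insert a D) (mem_filter.mpr ⟨mem_powerset.mpr (insert_subset ha hD.1), hins⟩)
    rw [card_insert_of_notMem haD] at this
    omega
  rw [coe_insert, Set.pairwise_insert_of_symm] at hnot
  obtain ⟨d, hd, -, hnd⟩ : ∃ d ∈ D, a ≠ d ∧ ¬DisjointOn K a d := by simpa [hD.2] using hnot
  obtain ⟨i, hi, j, hj, hij⟩ : ∃ i ∈ K, ∃ j ∈ K, a i = d j := by simpa [DisjointOn] using hnd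
  exact ⟨i, hi, d, hd, j, hj, hij⟩

theorem exists_le_card_filter_of_forall_exists {β γ : Type*} {s : Finset β} {P : Finset γ}
    (R : β → γ → Prop) [DecidableRel R] (hs : s.Nonempty) (hcover : ∀ a ∈ s, ∃ p ∈ P, R a p)
    {n : ℕ} (hn : P.card * n ≤ s.card) : ∃ p ∈ P, n ≤ (s.filter (R · p)).card := by
  classical
  have hP : P.Nonempty := by
    obtain ⟨a, ha⟩ := hs
    obtain ⟨p, hp, -⟩ := hcover a ha
    exact ⟨p, hp⟩
  have hsub : s ⊆ P.biUnion fun p => s.filter (R · p) := fun a ha => by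
    obtain ⟨p, hp, hap⟩ := hcover a ha
    exact mem_biUnion.mpr ⟨p, hp, mem_filter.mpr ⟨ha, hap⟩⟩
  refine exists_le_of_sum_le hP ?_
  calc ∑ _p ∈ P, n = P.card * n := by rw [sum_const, smul_eq_mul]
    _ ≤ s.card := hn
    _ ≤ (P.biUnion fun p => s.filter (R · p)).card := card_le_card hsub
    _ ≤ ∑ p ∈ P, (s.filter (R · p)).card := card_biUnion_le

theorem exists_le_card_filter_apply_eq [DecidableEq α] {K : Finset ι} {S D : Finset (ι → α)}
    (hS : S.Nonempty) (hmeets : ∀ a ∈ S, ∃ i ∈ K, ∃ d ∈ D, ∃ j ∈ K, a i = d j) {n : ℕ}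
    (hn : K.card * (D.card * K.card) * n ≤ S.card) :
    ∃ i ∈ K, ∃ v, n ≤ (S.filter fun a => a i = v).card := by
  obtain ⟨⟨i, d, j⟩, hp, hfiber⟩ := exists_le_card_filter_of_forall_exists (P := K ×ˢ D ×ˢ K)
    (fun a p => a p.1 = p.2.1 p.2.2) hS
    (fun a ha => by
      obtain ⟨i, hi, d, hd, j, hj, hij⟩ := hmeets a ha
      exact ⟨(i, d, j), by simp [hi, hd, hj], hij⟩)
    (by rwa [card_product, card_product])
  exact ⟨i, (mem_product.mp hp).1, d j, hfiber⟩

theorem exists_isTupleSunflower_of_agree_off [Fintype ι] (m : ℕ)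
    (K : Finset ι) (S : Finset (ι → α)) (hagree : ∀ a ∈ S, ∀ b ∈ S, ∀ i ∉ K, a i = b i)
    (hcard : (Fintype.card ι ^ 2 * m) ^ K.card * m ≤ S.card) :
    ∃ A ⊆ S, A.card = m ∧ ∃ I, IsTupleSunflower A I := by
  classical
  induction K using Finset.strongInduction generalizing S with
  | H K ih =>
  rcases K.eq_empty_or_nonempty with rfl | hK
  · obtain ⟨A, hAS, hAm⟩ := exists_subset_card_eq (by simpa using hcard)
    refine ⟨A, hAS, hAm, ∅ᶜ, isTupleSunflower_compl (fun a ha b hb => hagree a (hAS ha) b (hAS hb))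
      fun _ _ _ _ _ i hi => absurd hi (notMem_empty i)⟩
  obtain ⟨D, hDS, hDdisj, hmeets⟩ := exists_pairwise_disjointOn_forall_meets hK S
  by_cases hDm : m ≤ D.card
  · obtain ⟨A, hAD, hAm⟩ := exists_subset_card_eq hDm
    exact ⟨A, hAD.trans hDS, hAm, Kᶜ, isTupleSunflower_compl
      (fun a ha b hb => hagree a (hDS (hAD ha)) b (hDS (hAD hb))) (hDdisj.mono (coe_subset.mpr hAD))⟩
  have hm : 0 < m := by omega
  set c := Fintype.card ι ^ 2 * m
  have hc : 0 < c := by have := hK.card_pos.trans_le (card_le_univ K); positivity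
  have hS : S.Nonempty := card_pos.mp ((by positivity : 0 < c ^ K.card * m).trans_le hcard)
  have hKD : K.card * (D.card * K.card) ≤ c := calc
    K.card * (D.card * K.card) ≤ Fintype.card ι * (m * Fintype.card ι) := by
      gcongr <;> first | exact card_le_univ K | omega
    _ = c := by ring
  obtain ⟨i, hi, v, hfiber⟩ := exists_le_card_filter_apply_eq hS hmeets (n := c ^ (K.card - 1) * m)
    (calc
      _ ≤ c * (c ^ (K.card - 1) * m) := Nat.mul_le_mul_right _ hKD
      _ = c ^ K.card * m := by rw [← mul_assoc, mul_comm c, pow_sub_one_mul hK.card_pos.ne']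
      _ ≤ S.card := hcard)
  obtain ⟨A, hA, hsunflower⟩ := ih (K.erase i) (erase_ssubset hi) (S.filter fun a => a i = v)
    (fun a ha b hb i' hi' => by
      rw [mem_filter] at ha hb
      by_cases h : i' = i
      · rw [h, ha.2, hb.2]
      · exact hagree a ha.1 b hb.1 i' fun h' => hi' (mem_erase.mpr ⟨h, h'⟩))
    (by rwa [card_erase_of_mem hi])
  exact ⟨A, hA.trans (filter_subset _ _), hsunflower⟩

theorem tuple_sunflower_general (t m : ℕ) :
    ∃ n : ℕ, ∀ (α : Type) (S : Finset (Fin t → α)), n ≤ S.card →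
      ∃ A ⊆ S, A.card = m ∧ ∃ I : Finset (Fin t),
        ∀ a ∈ A, ∀ a' ∈ A, a ≠ a' →
          (∀ i ∈ I, a i = a' i) ∧
          (∀ i ∉ I, ∀ j ∉ I, a i ≠ a' j) :=
  ⟨(t ^ 2 * m) ^ t * m, fun _ S hS => exists_isTupleSunflower_of_agree_off m univ S
    (fun _ _ _ _ i hi => absurd (mem_univ i) hi) (by rwa [card_univ, Fintype.card_fin])⟩

/-- Sunflower lemma for tuples: for all positive `t`, `m` there is `n` such that
every set of at least `n` tuples of length `t` contains `m` tuples that agree on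
the coordinates of some index set `I` and whose restrictions outside `I` are
pairwise disjoint (share no element). -/
theorem tuple_sunflower (t m : ℕ) (ht : 1 ≤ t) (hm : 1 ≤ m) :
    ∃ n : ℕ, ∀ (α : Type) (S : Finset (Fin t → α)), n ≤ S.card →
      ∃ A ⊆ S, A.card = m ∧ ∃ I : Finset (Fin t),
        ∀ a ∈ A, ∀ a' ∈ A, a ≠ a' →
          (∀ i ∈ I, a i = a' i) ∧
          (∀ i ∉ I, ∀ j ∉ I, a i ≠ a' j) :=
  tuple_sunflower_general t m
end

section
/- For every graph G and every k ≥ 2: the k-flip-depth of G is at most the SC-depth of G, and the SC-depth of G is at most 3k² times the k-flip-depth of G. -/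
open Classical

variable {V : Type}

/-- Reachability inside the vertex set `s` along edges of `H`. -/
def Reach (s : Finset V) (H : V → V → Prop) : V → V → Prop :=
  Relation.ReflTransGen (fun a b => a ∈ s ∧ b ∈ s ∧ H a b)

open Classical in
/-- The vertex set of the connected component of `v` in the graph `H` restricted to `s`. -/
noncomputable def component (s : Finset V) (H : V → V → Prop) (v : V) : Finset V :=
  s.filter (Reach s H v)

/-- `C` is the vertex set of a connected component of `H` restricted to `s`. -/
def IsComponent (s : Finset V) (H : V → V → Prop) (C : Finset V) : Prop :=
  ∃ v ∈ s, C = component s H v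

/-- `H` is a `k`-flip of `E` on the vertex set `s`: there is a partition of `s` into at
most `k` parts (given by `P`) and a symmetric set `F` of pairs of parts such that the
adjacency between flipped pairs of parts is complemented; self-loops are preserved. -/
def IsKFlip (k : ℕ) (s : Finset V) (E H : V → V → Prop) : Prop :=
  ∃ (P : V → Fin k) (F : Fin k → Fin k → Prop),
    (∀ i j, F i j ↔ F j i) ∧
    (∀ u ∈ s, ∀ v ∈ s, u ≠ v →
      (H u v ↔ ((F (P u) (P v) ∧ ¬ E u v) ∨ (¬ F (P u) (P v) ∧ E u v)))) ∧
    (∀ u ∈ s, (H u u ↔ E u u))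

/-- `H` is a subset-complement of `E` on `s`: the adjacency inside some subset `A`
is complemented; self-loops are preserved. -/
def IsSC (s : Finset V) (E H : V → V → Prop) : Prop :=
  ∃ A : Finset V,
    (∀ u ∈ s, ∀ v ∈ s, u ≠ v →
      (H u v ↔ ((u ∈ A ∧ v ∈ A ∧ ¬ E u v) ∨ (¬ (u ∈ A ∧ v ∈ A) ∧ E u v)))) ∧
    (∀ u ∈ s, (H u u ↔ E u u))

/-- `FlipDepthLe k s E d`: the `k`-flip-depth of the graph `E` on vertex set `s` is at
most `d`.  The single-vertex graph has depth `0`; otherwise one may perform a `k`-flip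
and recurse on all connected components. -/
inductive FlipDepthLe (k : ℕ) : Finset V → (V → V → Prop) → ℕ → Prop
  | single (v : V) (E : V → V → Prop) (d : ℕ) : FlipDepthLe k {v} E d
  | step (s : Finset V) (E H : V → V → Prop) (d : ℕ) :
      IsKFlip k s E H →
      (∀ C, IsComponent s H C → FlipDepthLe k C H d) →
      FlipDepthLe k s E (d + 1)

/-- `SCDepthLe s E d`: the SC-depth of the graph `E` on vertex set `s` is at most `d`. -/
inductive SCDepthLe : Finset V → (V → V → Prop) → ℕ → Prop
  | single (v : V) (E : V → V → Prop) (d : ℕ) : SCDepthLe {v} E d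
  | step (s : Finset V) (E H : V → V → Prop) (d : ℕ) :
      IsSC s E H →
      (∀ C, IsComponent s H C → SCDepthLe C H d) →
      SCDepthLe s E (d + 1)

/-! A subset-complement of `A` is the `2`-flip with parts `A`, `Aᶜ` that flips only the pair
`(A, A)`, so every SC-decomposition is a `k`-flip decomposition.

Conversely, a `k`-flip complements the adjacency between the pairs of parts `{Pᵢ, Pⱼ}` of a
symmetric set. Complementing `Pᵢ ∪ Pⱼ`, then `Pᵢ`, then `Pⱼ` flips the edge relation of `u ≠ v`
an odd number of times exactly when `{P u, P v} = {i, j}` (also for `i = j`), so a `k`-flip is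
a chain of at most `3 * card (Sym2 (Fin k)) ≤ 3k²` subset-complements. Replacing each flip of a
decomposition by such a chain costs at most `3k²` levels, since SC-depth does not increase on
nonempty induced subgraphs. -/

section Components

variable {s t : Finset V} {H : V → V → Prop} {v : V}

lemma Reach.mono (hst : s ⊆ t) {w : V} (h : Reach s H v w) : Reach t H v w :=
  Relation.ReflTransGen.mono (fun _ _ ⟨ha, hb, hab⟩ => ⟨hst ha, hst hb, hab⟩) _ _ h

lemma component_subset_component (hst : s ⊆ t) : component s H v ⊆ component t H v :=
  (Finset.filter_subset_filter _ hst).trans <|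
    Finset.monotone_filter_right _ fun _ _ => Reach.mono hst

lemma component_subset : component s H v ⊆ s := Finset.filter_subset _ _

lemma mem_component_self (hv : v ∈ s) : v ∈ component s H v :=
  Finset.mem_filter.mpr ⟨hv, Relation.ReflTransGen.refl⟩

end Components

section FlipAlong

def IsFlipAlong (s : Finset V) (R E H : V → V → Prop) : Prop :=
  (∀ u ∈ s, ∀ v ∈ s, u ≠ v → (H u v ↔ Xor (R u v) (E u v))) ∧
    ∀ u ∈ s, (H u u ↔ E u u)

variable {s : Finset V} {R R₁ R₂ E E' H : V → V → Prop}

lemma isSC_iff_exists_isFlipAlong :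
    IsSC s E H ↔ ∃ A : Finset V, IsFlipAlong s (fun u v => u ∈ A ∧ v ∈ A) E H := by
  simp only [IsSC, IsFlipAlong, Xor, and_assoc]
  congr! 10
  tauto

lemma isKFlip_iff_exists_isFlipAlong {k : ℕ} :
    IsKFlip k s E H ↔ ∃ (P : V → Fin k) (F : Fin k → Fin k → Prop),
      (∀ i j, F i j ↔ F j i) ∧ IsFlipAlong s (fun u v => F (P u) (P v)) E H := by
  simp only [IsKFlip, IsFlipAlong, Xor]
  congr! 11
  tauto

lemma exists_isFlipAlong (s : Finset V) (R E : V → V → Prop) : ∃ H, IsFlipAlong s R E H :=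
  ⟨fun u v => if u = v then E u v else Xor (R u v) (E u v),
    fun u _ v _ huv => by simp only [if_neg huv], fun u _ => by simp only [if_pos]⟩

lemma IsFlipAlong.symm (h : IsFlipAlong s R E H) : IsFlipAlong s R H E := by
  refine ⟨fun u hu v hv huv => ?_, fun u hu => (h.2 u hu).symm⟩
  rw [h.1 u hu v hv huv]
  simp only [Xor]
  tauto

lemma IsFlipAlong.trans (h₁ : IsFlipAlong s R₁ E E') (h₂ : IsFlipAlong s R₂ E' H) :
    IsFlipAlong s (fun u v => Xor (R₁ u v) (R₂ u v)) E H := by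
  refine ⟨fun u hu v hv huv => ?_, fun u hu => (h₂.2 u hu).trans (h₁.2 u hu)⟩
  rw [h₂.1 u hu v hv huv, h₁.1 u hu v hv huv]
  simp only [Xor]
  tauto

lemma IsFlipAlong.congr_rel (h : IsFlipAlong s R₁ E H)
    (hR : ∀ u ∈ s, ∀ v ∈ s, u ≠ v → (R₁ u v ↔ R₂ u v)) : IsFlipAlong s R₂ E H :=
  ⟨fun u hu v hv huv => by rw [h.1 u hu v hv huv, hR u hu v hv huv], h.2⟩

end FlipAlong

lemma IsSC.subset {s t : Finset V} {E H : V → V → Prop} (h : IsSC s E H) (hts : t ⊆ s) :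
    IsSC t E H := by
  obtain ⟨A, hoff, hdiag⟩ := h
  exact ⟨A, fun u hu v hv => hoff u (hts hu) v (hts hv), fun u hu => hdiag u (hts hu)⟩

lemma IsFlipAlong.isSC {s A : Finset V} {E H : V → V → Prop}
    (h : IsFlipAlong s (fun u v => u ∈ A ∧ v ∈ A) E H) : IsSC s E H :=
  isSC_iff_exists_isFlipAlong.mpr ⟨A, h⟩

lemma isSC_of_isFlipAlong_false {s : Finset V} {E H : V → V → Prop}
    (h : IsFlipAlong s (fun _ _ => False) E H) : IsSC s E H :=
  IsFlipAlong.isSC (A := ∅) (h.congr_rel fun _ _ _ _ _ => by simp)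

lemma isKFlip_of_isSC {k : ℕ} (hk : 2 ≤ k) {s : Finset V} {E H : V → V → Prop}
    (h : IsSC s E H) : IsKFlip k s E H := by
  obtain ⟨A, hA⟩ := isSC_iff_exists_isFlipAlong.mp h
  let P : V → Fin k := fun u => if u ∈ A then ⟨0, by omega⟩ else ⟨1, by omega⟩
  have hP : ∀ u, (P u).val = 0 ↔ u ∈ A := fun u => by by_cases hu : u ∈ A <;> simp [P, hu]
  refine isKFlip_iff_exists_isFlipAlong.mpr
    ⟨P, fun i j => i.val = 0 ∧ j.val = 0, fun _ _ => and_comm, hA.congr_rel ?_⟩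
  exact fun u _ v _ _ => (and_congr (hP u) (hP v)).symm

namespace SCDepthLe

variable {s : Finset V} {E : V → V → Prop} {d : ℕ}

lemma mono (h : SCDepthLe s E d) {d' : ℕ} (hd : d ≤ d') : SCDepthLe s E d' := by
  induction h generalizing d' with
  | single v E d => exact single v E d'
  | step s E H d hsc _ ih =>
    obtain ⟨d', rfl⟩ := Nat.exists_eq_add_one.mpr (by omega : 0 < d')
    exact step s E H d' hsc fun C hC => ih C hC (by omega)

lemma subset (h : SCDepthLe s E d) {t : Finset V} (hts : t ⊆ s) (ht : t.Nonempty) :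
    SCDepthLe t E d := by
  induction h generalizing t with
  | single v E d =>
    obtain rfl := (Finset.subset_singleton_iff.mp hts).resolve_left ht.ne_empty
    exact single v E d
  | step s E H d hsc _ ih =>
    refine step t E H d (hsc.subset hts) ?_
    rintro C ⟨v, hv, rfl⟩
    exact ih _ ⟨v, hts hv, rfl⟩ (component_subset_component hts) ⟨v, mem_component_self hv⟩

end SCDepthLe

inductive SCChain (s : Finset V) : (V → V → Prop) → (V → V → Prop) → ℕ → Prop
  | single {E H : V → V → Prop} : IsSC s E H → SCChain s E H 1
  | cons {E E' H : V → V → Prop} {m : ℕ} :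
      IsSC s E E' → SCChain s E' H m → SCChain s E H (m + 1)

namespace SCChain

variable {s : Finset V} {E E' H : V → V → Prop} {m n : ℕ}

lemma trans (h₁ : SCChain s E E' m) (h₂ : SCChain s E' H n) : SCChain s E H (m + n) := by
  induction h₁ with
  | single hsc => rw [add_comm]; exact cons hsc h₂
  | cons hsc _ ih => rw [Nat.add_right_comm]; exact cons hsc (ih h₂)

lemma subset (h : SCChain s E H m) {t : Finset V} (hts : t ⊆ s) : SCChain t E H m := by
  induction h with
  | single hsc => exact single (hsc.subset hts)
  | cons hsc _ ih => exact cons (hsc.subset hts) ih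

lemma scDepthLe {d : ℕ} (h : SCChain s E H m)
    (hH : ∀ C, IsComponent s H C → SCDepthLe C H d) {t : Finset V} (hts : t ⊆ s) :
    SCDepthLe t E (d + m) := by
  induction h generalizing t with
  | @single E H hsc =>
    refine .step t E H d (hsc.subset hts) ?_
    rintro C ⟨v, hv, rfl⟩
    exact (hH _ ⟨v, hts hv, rfl⟩).subset (component_subset_component hts)
      ⟨v, mem_component_self hv⟩
  | @cons E E' H m hsc _ ih =>
    refine .step t E E' (d + m) (hsc.subset hts) ?_
    rintro C ⟨v, _, rfl⟩
    exact ih hH (component_subset.trans hts)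

end SCChain

section FlipSimulation

variable {α : Type*} {s : Finset V} (P : V → α)

lemma scChain_three_of_isFlipAlong_sym2_eq (e : Sym2 α) {E H : V → V → Prop}
    (h : IsFlipAlong s (fun u v => s(P u, P v) = e) E H) : SCChain s E H 3 := by
  induction e using Sym2.inductionOn with | hf i j => ?_
  let part : α → Finset V := fun a => s.filter (P · = a)
  have hpart : ∀ u ∈ s, ∀ a, u ∈ part a ↔ P u = a := fun u hu a => by simp [part, hu]
  obtain ⟨E₁, h₁⟩ :=
    exists_isFlipAlong s (fun u v => u ∈ part i ∪ part j ∧ v ∈ part i ∪ part j) E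
  obtain ⟨E₂, h₂⟩ := exists_isFlipAlong s (fun u v => u ∈ part i ∧ v ∈ part i) E₁
  have h₃ : IsFlipAlong s (fun u v => u ∈ part j ∧ v ∈ part j) E₂ H := by
    refine ((h₁.trans h₂).symm.trans h).congr_rel fun u hu v hv _ => ?_
    simp only [Finset.mem_union, hpart u hu, hpart v hv, Sym2.eq_iff, Xor]
    grind
  exact .cons h₁.isSC (.cons h₂.isSC (.single h₃.isSC))

lemma scChain_of_isFlipAlong_sym2_mem {S : Finset (Sym2 α)} (hS : S.Nonempty)
    {E H : V → V → Prop} (h : IsFlipAlong s (fun u v => s(P u, P v) ∈ S) E H) :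
    SCChain s E H (3 * S.card) := by
  induction hS using Finset.Nonempty.cons_induction generalizing E H with
  | singleton e =>
    exact scChain_three_of_isFlipAlong_sym2_eq P e
      (h.congr_rel fun _ _ _ _ _ => Finset.mem_singleton)
  | cons e S he _ ih =>
    obtain ⟨E', hE'⟩ := exists_isFlipAlong s (fun u v => s(P u, P v) ∈ S) E
    have hlast : IsFlipAlong s (fun u v => s(P u, P v) = e) E' H := by
      refine (hE'.symm.trans h).congr_rel fun u _ v _ _ => ?_
      simp only [Finset.mem_cons, Xor]
      grind
    rw [Finset.card_cons, mul_add_one]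
    exact (ih hE').trans (scChain_three_of_isFlipAlong_sym2_eq P e hlast)

end FlipSimulation

lemma IsKFlip.exists_scChain {k : ℕ} (hk : 0 < k) {s : Finset V} {E H : V → V → Prop}
    (h : IsKFlip k s E H) : ∃ m ≤ 3 * k ^ 2, SCChain s E H m := by
  obtain ⟨P, F, hF, hPF⟩ := isKFlip_iff_exists_isFlipAlong.mp h
  let S : Finset (Sym2 (Fin k)) :=
    Finset.univ.filter (· ∈ Sym2.fromRel (r := F) ⟨fun i j => (hF i j).mp⟩)
  have hS : IsFlipAlong s (fun u v => s(P u, P v) ∈ S) E H :=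
    hPF.congr_rel fun u _ v _ _ => by simp [S, Sym2.fromRel_prop]
  obtain hSe | hSne := S.eq_empty_or_nonempty
  · refine ⟨1, by nlinarith, .single (isSC_of_isFlipAlong_false (hS.congr_rel ?_))⟩
    simp [hSe]
  · have hcard : S.card ≤ k ^ 2 := calc
      S.card ≤ Fintype.card (Sym2 (Fin k)) := Finset.card_le_univ S
      _ ≤ Fintype.card (Fin k × Fin k) := Fintype.card_le_of_surjective _ Sym2.mk_surjective
      _ = k ^ 2 := by simp [sq]
    exact ⟨3 * S.card, by omega, scChain_of_isFlipAlong_sym2_mem P hSne hS⟩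

lemma SCDepthLe.flipDepthLe {k : ℕ} (hk : 2 ≤ k) {s : Finset V} {E : V → V → Prop} {d : ℕ}
    (h : SCDepthLe s E d) : FlipDepthLe k s E d := by
  induction h with
  | single v E d => exact .single v E d
  | step s E H d hsc _ ih => exact .step s E H d (isKFlip_of_isSC hk hsc) ih

lemma FlipDepthLe.scDepthLe {k : ℕ} (hk : 0 < k) {s : Finset V} {E : V → V → Prop} {d : ℕ}
    (h : FlipDepthLe k s E d) : SCDepthLe s E (3 * k ^ 2 * d) := by
  induction h with
  | single v E d => exact .single v E _
  | step s E H d hflip _ ih =>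
    obtain ⟨m, hm, hchain⟩ := hflip.exists_scChain hk
    refine (hchain.scDepthLe ih subset_rfl).mono ?_
    rw [mul_add_one]
    omega

theorem flipDepth_le_SCDepth_le_general (k : ℕ) (hk : 2 ≤ k) (s : Finset V) (E : V → V → Prop) :
    (∀ d, SCDepthLe s E d → FlipDepthLe k s E d) ∧
    (∀ d, FlipDepthLe k s E d → SCDepthLe s E (3 * k ^ 2 * d)) :=
  ⟨fun _ h => h.flipDepthLe hk, fun _ h => h.scDepthLe (by omega)⟩

/-- For every graph `G` and every `k ≥ 2`: the `k`-flip-depth of `G` is at most its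
SC-depth, and its SC-depth is at most `3k²` times its `k`-flip-depth. -/
theorem flipDepth_le_SCDepth_le (k : ℕ) (hk : 2 ≤ k) (s : Finset V) (E : V → V → Prop)
    (hsym : ∀ u v, E u v → E v u) :
    (∀ d, SCDepthLe s E d → FlipDepthLe k s E d) ∧
    (∀ d, FlipDepthLe k s E d → SCDepthLe s E (3 * k ^ 2 * d)) :=
  flipDepth_le_SCDepth_le_general k hk s E
end

section
/- M-similarity is preserved under taking induced subgraphs with restricted partition: if graphs G and H on vertex set V satisfy G ⊖ M = H ⊖ M for a partition M of V, then for every S ⊆ V, the induced subgraphs satisfy G[S] ⊖ (M|_S) = H[S] ⊖ (M|_S), where M|_S is the partition of S given by intersecting parts of M with S. -/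
variable {V ι : Type}

/-- The pair of parts `(i, j)` of the partition `P` is fully adjacent in `E`. -/
def FullyAdj (E : V → V → Prop) (P : V → ι) (i j : ι) : Prop :=
  ∀ u v, P u = i → P v = j → u ≠ v → E u v

/-- The canonical subflip `E ⊖ P`: delete all edges between every fully-adjacent pair
of parts of the partition `P` (self-loops are preserved). -/
def CanonSubflip (E : V → V → Prop) (P : V → ι) : V → V → Prop :=
  fun u v => E u v ∧ (u = v ∨ ¬ FullyAdj E P (P u) (P v))

lemma similarity_induced_key (E H : V → V → Prop) (P : V → ι)
    (h : ∀ u v, CanonSubflip E P u v ↔ CanonSubflip H P u v) (S : Set V) (u v : S)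
    (hG : CanonSubflip (fun a b : S => E a b) (fun a : S => P a) u v) :
    CanonSubflip (fun a b : S => H a b) (fun a : S => P a) u v := by
  obtain ⟨hE, hc⟩ := hG
  by_cases huv : u = v
  · subst huv
    exact ⟨((h u u).mp ⟨hE, Or.inl rfl⟩).1, Or.inl rfl⟩
  · have hnFS : ¬ FullyAdj (fun a b : S => E a b) (fun a : S => P a)
        (P (u : V)) (P (v : V)) := by
      rcases hc with h1 | h1
      · exact absurd h1 huv
      · exact h1
    have hne : (u : V) ≠ (v : V) := fun hh => huv (Subtype.ext hh)
    by_cases hHF : FullyAdj H P (P (u : V)) (P (v : V))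
    · exfalso
      have hEF : FullyAdj E P (P (u : V)) (P (v : V)) := by
        by_contra hEF
        have hcH := (h u v).mp ⟨hE, Or.inr hEF⟩
        rcases hcH.2 with h2 | h2
        · exact hne h2
        · exact h2 hHF
      exact hnFS (fun a b ha hb hab => hEF a b ha hb (fun hh => hab (Subtype.ext hh)))
    · by_cases hEF : FullyAdj E P (P (u : V)) (P (v : V))
      · exact absurd (fun (a b : S) ha hb hab =>
          hEF a b ha hb (fun hh => hab (Subtype.ext hh))) hnFS
      · have hH : H u v := ((h u v).mp ⟨hE, Or.inr hEF⟩).1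
        refine ⟨hH, Or.inr ?_⟩
        intro hFSH
        apply hnFS
        intro a b ha hb hab
        have hHab : H a b := hFSH a b ha hb hab
        have hnF' : ¬ FullyAdj H P (P (a : V)) (P (b : V)) := by
          rw [show P (a : V) = P (u : V) from ha, show P (b : V) = P (v : V) from hb]
          exact hHF
        exact ((h a b).mpr ⟨hHab, Or.inr hnF'⟩).1

/-- `M`-similarity is preserved under taking induced subgraphs with the restricted
partition: if `G ⊖ M = H ⊖ M`, then for every `S ⊆ V`,
`G[S] ⊖ (M|_S) = H[S] ⊖ (M|_S)`. -/
theorem similarity_induced (E H : V → V → Prop) (P : V → ι)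
    (hEsym : ∀ u v, E u v → E v u) (hHsym : ∀ u v, H u v → H v u)
    (h : ∀ u v, CanonSubflip E P u v ↔ CanonSubflip H P u v) (S : Set V) :
    ∀ u v : S,
      (CanonSubflip (fun a b : S => E a b) (fun a : S => P a) u v ↔
       CanonSubflip (fun a b : S => H a b) (fun a : S => P a) u v) := by
  intro u v
  exact ⟨similarity_induced_key E H P h S u v,
    similarity_induced_key H E P (fun a b => (h a b).symm) S u v⟩
end
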